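/- arXiv:2406.13298 — 3 statements merged into one kernel-verified Lean document; each statement's English description precedes it below -/
import Mathlib

section
/- If f ∈ Ω, then |z f'(z)/f(z) - 1| ≤ r/(2-r) for all z with |z| = r < 1, z ≠ 0. -/
/-!
With `g z = z * f' z - f z` one has `g 0 = g' 0 = 0` and `‖g‖ < 1/2` on the disk, so the
second-order Schwarz lemma gives `‖g z‖ ≤ ‖z‖² / 2`. As `(f z / z)' = g z / z²`, the function
`f z / z` is `1/2`-Lipschitz with value `1` at the origin, whence `‖f z‖ ≥ ‖z‖ (1 - ‖z‖ / 2)`.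
Dividing, `‖z f' z / f z - 1‖ = ‖g z‖ / ‖f z‖ ≤ ‖z‖ / (2 - ‖z‖)`.
-/

open Metric Complex Set Filter Topology

namespace Complex

variable {E : Type*} [NormedAddCommGroup E] [NormedSpace ℂ E]

theorem dist_le_mul_div_sq_of_mapsTo_ball_of_deriv_eq_zero {g : ℂ → E} {c z : ℂ} {R M : ℝ}
    (hd : DifferentiableOn ℂ g (ball c R)) (h_maps : MapsTo g (ball c R) (closedBall (g c) M))
    (hg' : deriv g c = 0) (hz : z ∈ ball c R) :
    dist (g z) (g c) ≤ M * (dist z c / R) ^ 2 := by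
  have hc : HasDerivAt g 0 c := by
    rw [← hg']
    exact (hd.differentiableAt
      (isOpen_ball.mem_nhds (mem_ball_self (pos_of_mem_ball hz)))).hasDerivAt
  have ho : (g · - g c) =o[𝓝 c] (fun w ↦ ‖w - c‖ ^ 1) := by
    simpa [Asymptotics.isLittleO_norm_right] using hasDerivAt_iff_isLittleO.mp hc
  exact dist_le_mul_div_pow_of_mapsTo_ball_of_isLittleO hd h_maps ho hz

end Complex

theorem hasDerivAt_mul_deriv_sub {f : ℂ → ℂ} {z : ℂ} (hf : AnalyticAt ℂ f z) :
    HasDerivAt (fun w ↦ w * deriv f w - f w) (z * deriv (deriv f) z) z := by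
  simpa using ((hasDerivAt_id' z).fun_mul hf.deriv.differentiableAt.hasDerivAt).fun_sub
    hf.differentiableAt.hasDerivAt

theorem deriv_dslope_zero_of_ne {f : ℂ → ℂ} {w : ℂ} (hf : DifferentiableAt ℂ f w) (hw : w ≠ 0) :
    deriv (dslope f 0) w = (w * deriv f w - (f w - f 0)) / w ^ 2 := by
  have hev : dslope f 0 =ᶠ[𝓝 w] fun x ↦ (f x - f 0) / x := by
    filter_upwards [isOpen_compl_singleton.mem_nhds hw] with x hx
    rw [dslope_of_ne _ hx, slope_def_field, sub_zero]
  rw [hev.deriv_eq, ((hf.hasDerivAt.sub_const (f 0)).fun_div (hasDerivAt_id' w) hw).deriv]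
  ring

theorem norm_mul_deriv_sub_le_mul_sq {f : ℂ → ℂ} {M : ℝ} (hf : DifferentiableOn ℂ f (ball 0 1))
    (hf0 : f 0 = 0) (hM : ∀ w ∈ ball (0 : ℂ) 1, ‖w * deriv f w - f w‖ ≤ M) {z : ℂ}
    (hz : z ∈ ball (0 : ℂ) 1) : ‖z * deriv f z - f z‖ ≤ M * ‖z‖ ^ 2 := by
  have hfa : AnalyticOnNhd ℂ f (ball 0 1) := hf.analyticOnNhd isOpen_ball
  have hg : DifferentiableOn ℂ (fun w ↦ w * deriv f w - f w) (ball 0 1) := fun w hw ↦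
    (hasDerivAt_mul_deriv_sub (hfa w hw)).differentiableAt.differentiableWithinAt
  have hg' : deriv (fun w ↦ w * deriv f w - f w) 0 = 0 := by
    simpa using (hasDerivAt_mul_deriv_sub (hfa 0 (mem_ball_self one_pos))).deriv
  have h_maps : MapsTo (fun w ↦ w * deriv f w - f w) (ball 0 1)
      (closedBall (0 * deriv f 0 - f 0) M) := fun w hw ↦ by
    simpa [hf0] using hM w hw
  simpa [hf0] using Complex.dist_le_mul_div_sq_of_mapsTo_ball_of_deriv_eq_zero hg h_maps hg' hz

theorem norm_dslope_sub_deriv_le {f : ℂ → ℂ} {M : ℝ} (hf : DifferentiableOn ℂ f (ball 0 1))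
    (hf0 : f 0 = 0) (hM : ∀ w ∈ ball (0 : ℂ) 1, ‖w * deriv f w - f w‖ ≤ M * ‖w‖ ^ 2) {z : ℂ}
    (hz : z ∈ ball (0 : ℂ) 1) : ‖dslope f 0 z - deriv f 0‖ ≤ M * ‖z‖ := by
  have h0 : (0 : ℂ) ∈ ball (0 : ℂ) 1 := mem_ball_self one_pos
  have hp : DifferentiableOn ℂ (dslope f 0) (ball 0 1) :=
    (differentiableOn_dslope (isOpen_ball.mem_nhds h0)).2 hf
  have h_ne : ∀ w ∈ ball (0 : ℂ) 1, w ≠ 0 → ‖deriv (dslope f 0) w‖ ≤ M := by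
    intro w hw hw0
    rw [deriv_dslope_zero_of_ne (hf.differentiableAt (isOpen_ball.mem_nhds hw)) hw0, hf0, sub_zero,
      norm_div, norm_pow, div_le_iff₀ (by positivity)]
    exact hM w hw
  have h_bound : ∀ w ∈ ball (0 : ℂ) 1, ‖deriv (dslope f 0) w‖ ≤ M := by
    intro w hw
    rcases eq_or_ne w 0 with rfl | hw0
    · have hc := ((hp.analyticOnNhd isOpen_ball 0 h0).deriv.continuousAt).norm
      refine le_of_tendsto (x := 𝓝[≠] 0) (hc.tendsto.mono_left nhdsWithin_le_nhds) ?_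
      filter_upwards [self_mem_nhdsWithin, mem_nhdsWithin_of_mem_nhds (isOpen_ball.mem_nhds h0)]
        with x hx hxb using h_ne x hxb hx
    · exact h_ne w hw hw0
  simpa [dslope_same] using (convex_ball (0 : ℂ) 1).norm_image_sub_le_of_norm_deriv_le
    (fun w hw ↦ hp.differentiableAt (isOpen_ball.mem_nhds hw)) h_bound h0 hz

theorem stmt_3 (f : ℂ → ℂ)
    (hf : DifferentiableOn ℂ f (ball (0:ℂ) 1))
    (hf0 : f 0 = 0) (hf1 : deriv f 0 = 1)
    (hΩ : ∀ z ∈ ball (0:ℂ) 1, ‖z * deriv f z - f z‖ < 1/2) :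
    ∀ z ∈ ball (0:ℂ) 1, z ≠ 0 →
      ‖z * deriv f z / f z - 1‖ ≤ ‖z‖ / (2 - ‖z‖) := by
  intro z hz hz0
  have hg : ∀ w ∈ ball (0 : ℂ) 1, ‖w * deriv f w - f w‖ ≤ 1 / 2 * ‖w‖ ^ 2 := fun w hw ↦
    norm_mul_deriv_sub_le_mul_sq hf hf0 (fun v hv ↦ (hΩ v hv).le) hw
  have hp := norm_dslope_sub_deriv_le hf hf0 hg hz
  rw [hf1, dslope_of_ne _ hz0, slope_def_field, hf0, sub_zero, sub_zero] at hp
  have hr : ‖z‖ < 1 := mem_ball_zero_iff.mp hz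
  have hr0 : 0 < ‖z‖ := norm_pos_iff.mpr hz0
  have hfz : ‖z‖ * (2 - ‖z‖) / 2 ≤ ‖f z‖ := by
    have h1 : 1 - ‖z‖ / 2 ≤ ‖f z / z‖ := by
      have := norm_sub_norm_le (1 : ℂ) (f z / z)
      rw [norm_one, norm_sub_rev] at this
      linarith
    calc ‖z‖ * (2 - ‖z‖) / 2 = ‖z‖ * (1 - ‖z‖ / 2) := by ring
      _ ≤ ‖z‖ * ‖f z / z‖ := by gcongr
      _ = ‖f z‖ := by rw [← norm_mul, mul_div_cancel₀ _ hz0]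
  have hfz0 : f z ≠ 0 := norm_pos_iff.mp (lt_of_lt_of_le (by nlinarith) hfz)
  rw [show z * deriv f z / f z - 1 = (z * deriv f z - f z) / f z by field_simp, norm_div,
    div_le_div_iff₀ (norm_pos_iff.mpr hfz0) (by linarith)]
  nlinarith [hg z hz, norm_nonneg (z * deriv f z - f z)]
end

section
/- Let λ > 0 and f ∈ Ω_λ. Then |z f'(z)/f(z) - 1| < 1 for all z with 0 < |z| < 1/(2λ); in particular f is starlike (univalent with Re(z f'/f) > 0) in the disk |z| < 1/(2λ). -/
/-!
Write `f z = z h(z)` with `h = dslope f 0`, so `h 0 = f'(0) = 1`. Then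
`z f'(z) - f(z) = z² h'(z)`, and two applications of the Schwarz lemma turn
`|z² h'(z)| < λ` into `|h'| ≤ λ` on the disk. By the mean value theorem
`|h(z) - 1| ≤ λ|z|`, and since `z f'/f - 1 = z h'/h`,
`|z f'/f - 1| ≤ λ|z| / (1 - λ|z|)`, which is `< 1` exactly when `λ|z| < 1/2`.
-/

open Metric Complex

section Schwarz

variable {E : Type*} [NormedAddCommGroup E] [NormedSpace ℂ E]

theorem norm_le_div_of_forall_norm_sub_smul_le {k : ℂ → E} {c z : ℂ} {R M : ℝ}
    (hk : DifferentiableOn ℂ k (ball c R)) (hM : ∀ w ∈ ball c R, ‖(w - c) • k w‖ ≤ M)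
    (hz : z ∈ ball c R) : ‖k z‖ ≤ M / R := by
  have hdslope : dslope (fun w => (w - c) • k w) c z = k z := by
    rcases eq_or_ne z c with rfl | hzc
    · have hkz : HasDerivAt k (deriv k z) z :=
        (hk.differentiableAt (isOpen_ball.mem_nhds hz)).hasDerivAt
      simpa using (((hasDerivAt_id' z).sub_const z).fun_smul hkz).deriv
    · exact dslope_sub_smul_of_ne k hzc
  rw [← hdslope]
  refine norm_dslope_le_div_of_mapsTo_ball ((differentiableOn_id.sub_const c).smul hk) ?_ hz
  intro w hw
  simpa using hM w hw

end Schwarz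

section OmegaLambda

variable {f : ℂ → ℂ} {lam : ℝ}

theorem eq_mul_dslope_of_apply_zero (hf0 : f 0 = 0) (z : ℂ) : f z = z * dslope f 0 z := by
  simpa using (sub_smul_dslope_of_zero hf0 z).symm

theorem differentiableOn_dslope_ball (hf : DifferentiableOn ℂ f (ball 0 1)) :
    DifferentiableOn ℂ (dslope f 0) (ball 0 1) :=
  (Complex.differentiableOn_dslope (ball_mem_nhds 0 one_pos)).mpr hf

theorem mul_deriv_sub_eq_sq_mul_deriv_dslope (hf : DifferentiableOn ℂ f (ball 0 1))
    (hf0 : f 0 = 0) {z : ℂ} (hz : z ∈ ball (0 : ℂ) 1) :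
    z * deriv f z - f z = z ^ 2 * deriv (dslope f 0) z := by
  have hh : HasDerivAt (dslope f 0) (deriv (dslope f 0) z) z :=
    ((differentiableOn_dslope_ball hf).differentiableAt (isOpen_ball.mem_nhds hz)).hasDerivAt
  have hf' : deriv f z = dslope f 0 z + z * deriv (dslope f 0) z := by
    simpa using (((hasDerivAt_id' z).mul hh).congr_of_eventuallyEq
      (Filter.Eventually.of_forall (eq_mul_dslope_of_apply_zero hf0))).deriv
  rw [hf', eq_mul_dslope_of_apply_zero hf0 z]
  ring

theorem norm_deriv_dslope_le (hf : DifferentiableOn ℂ f (ball 0 1)) (hf0 : f 0 = 0)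
    (hΩ : ∀ z ∈ ball (0 : ℂ) 1, ‖z * deriv f z - f z‖ ≤ lam) {z : ℂ} (hz : z ∈ ball (0 : ℂ) 1) :
    ‖deriv (dslope f 0) z‖ ≤ lam := by
  have hd : DifferentiableOn ℂ (deriv (dslope f 0)) (ball 0 1) :=
    ((differentiableOn_dslope_ball hf).analyticOnNhd isOpen_ball).deriv.differentiableOn
  have hmul : ∀ w ∈ ball (0 : ℂ) 1, ‖w * deriv (dslope f 0) w‖ ≤ lam := by
    intro w hw
    refine norm_le_div_of_forall_norm_sub_smul_le (k := fun w => w * deriv (dslope f 0) w)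
      (differentiableOn_id.mul hd) (fun u hu => ?_) hw |>.trans_eq (div_one lam)
    simpa [← mul_assoc, ← sq, ← mul_deriv_sub_eq_sq_mul_deriv_dslope hf hf0 hu] using hΩ u hu
  simpa using norm_le_div_of_forall_norm_sub_smul_le hd (by simpa using hmul) hz

theorem norm_dslope_sub_one_le (hf : DifferentiableOn ℂ f (ball 0 1)) (hf0 : f 0 = 0)
    (hf1 : deriv f 0 = 1) (hΩ : ∀ z ∈ ball (0 : ℂ) 1, ‖z * deriv f z - f z‖ ≤ lam)
    {z : ℂ} (hz : z ∈ ball (0 : ℂ) 1) : ‖dslope f 0 z - 1‖ ≤ lam * ‖z‖ := by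
  have := (convex_ball (0 : ℂ) 1).norm_image_sub_le_of_norm_deriv_le
    (fun w hw => (differentiableOn_dslope_ball hf).differentiableAt (isOpen_ball.mem_nhds hw))
    (fun w hw => norm_deriv_dslope_le hf hf0 hΩ hw) (mem_ball_self one_pos) hz
  simpa [dslope_same, hf1] using this

end OmegaLambda

theorem stmt_13 (lam : ℝ) (hlam : 0 < lam) (f : ℂ → ℂ)
    (hf : DifferentiableOn ℂ f (ball (0:ℂ) 1))
    (hf0 : f 0 = 0) (hf1 : deriv f 0 = 1)
    (hΩ : ∀ z ∈ ball (0:ℂ) 1, ‖z * deriv f z - f z‖ < lam) :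
    ∀ z ∈ ball (0:ℂ) 1, z ≠ 0 → ‖z‖ < 1 / (2 * lam) →
      ‖z * deriv f z / f z - 1‖ < 1 := by
  intro z hz hz0 hzlam
  have hΩ' : ∀ z ∈ ball (0 : ℂ) 1, ‖z * deriv f z - f z‖ ≤ lam := fun z hz => (hΩ z hz).le
  have hlz : lam * ‖z‖ < 1 / 2 := by
    rw [lt_div_iff₀ (by positivity)] at hzlam
    linarith
  have hnum : ‖z * deriv (dslope f 0) z‖ ≤ lam * ‖z‖ := by
    rw [norm_mul, mul_comm lam]
    exact mul_le_mul_of_nonneg_left (norm_deriv_dslope_le hf hf0 hΩ' hz) (norm_nonneg z)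
  have hden : 1 - lam * ‖z‖ ≤ ‖dslope f 0 z‖ := by
    have := norm_sub_norm_le 1 (dslope f 0 z)
    rw [norm_one, norm_sub_rev] at this
    linarith [norm_dslope_sub_one_le hf hf0 hf1 hΩ' hz]
  have hden0 : dslope f 0 z ≠ 0 := norm_pos_iff.mp (by linarith)
  have hquot : z * deriv f z / f z - 1 = z * deriv (dslope f 0) z / dslope f 0 z := by
    rw [div_sub_one (by simp [eq_mul_dslope_of_apply_zero hf0 z, hz0, hden0]),
      mul_deriv_sub_eq_sq_mul_deriv_dslope hf hf0 hz, eq_mul_dslope_of_apply_zero hf0 z]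
    field_simp
  rw [hquot, norm_div, div_lt_one (by linarith)]
  linarith
end

section
/- Let λ > 0 and f ∈ Ω_λ. Then |f'(z) - 1| ≤ 2λ|z| for all z in the unit disk; in particular f'(z) ≠ 0 and f is univalent in the disk |z| < 1/(2λ). -/
/-! With `g z = z * f' z - f z` we have `g 0 = g' 0 = 0` and `‖g‖ < λ`, so two applications of
the Schwarz lemma give `‖g z‖ ≤ λ ‖z‖²`. As `(f z / z)' = g z / z²`, the mean value theorem gives
`‖f z / z - 1‖ ≤ λ ‖z‖`, and `f' z - 1 = g z / z + (f z / z - 1)`. On a closed disc of radius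
`r < 1 / (2λ)` this bounds `‖f' - 1‖` by `2λr < 1`, so `z ↦ f z - z` is a contraction there and `f`
is injective. -/

open Metric Complex Topology

theorem HasDerivAt.dslope_of_ne {𝕜 : Type*} [NontriviallyNormedField 𝕜] {f : 𝕜 → 𝕜} {f' a b : 𝕜}
    (hf : HasDerivAt f f' b) (hb : b ≠ a) :
    HasDerivAt (dslope f a) ((f' * (b - a) - (f b - f a)) / (b - a) ^ 2) b := by
  have hslope : HasDerivAt (slope f a) ((f' * (b - a) - (f b - f a)) / (b - a) ^ 2) b := by
    rw [slope_fun_def_field]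
    simpa using (hf.sub_const (f a)).fun_div ((hasDerivAt_id b).sub_const a) (sub_ne_zero.2 hb)
  exact hslope.congr_of_eventuallyEq (dslope_eventuallyEq_slope_of_ne f hb)

namespace Complex

theorem norm_sub_le_div_sq_mul_sq_of_deriv_eq_zero {g : ℂ → ℂ} {c : ℂ} {R M : ℝ}
    (hg : DifferentiableOn ℂ g (ball c R)) (hg' : deriv g c = 0)
    (hM : ∀ z ∈ ball c R, ‖g z - g c‖ ≤ M) {z : ℂ} (hz : z ∈ ball c R) :
    ‖g z - g c‖ ≤ M / R ^ 2 * ‖z - c‖ ^ 2 := by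
  have hc : c ∈ ball c R := mem_ball_self (pos_of_mem_ball hz)
  have h₁ : Set.MapsTo (dslope g c) (ball c R) (closedBall (dslope g c c) (M / R)) := by
    intro w hw
    rw [dslope_same, hg', mem_closedBall, dist_zero_right]
    exact norm_dslope_le_div_of_mapsTo_ball hg
      (fun u hu => by simpa [mem_closedBall, dist_eq_norm] using hM u hu) hw
  have h₂ : ‖dslope (dslope g c) c z‖ ≤ M / R / R :=
    norm_dslope_le_div_of_mapsTo_ball
      ((differentiableOn_dslope (isOpen_ball.mem_nhds hc)).2 hg) h₁ hz
  have hsq : g z - g c = (z - c) ^ 2 * dslope (dslope g c) c z := by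
    rw [← sub_smul_dslope, ← sub_zero (dslope g c z), ← hg', ← dslope_same, ← sub_smul_dslope]
    simp only [smul_eq_mul]
    ring
  rw [hsq, norm_mul, norm_pow, mul_comm, sq R, ← div_div]
  gcongr

theorem norm_deriv_dslope_le {f : ℂ → ℂ} {c : ℂ} {R M : ℝ} (hf : DifferentiableOn ℂ f (ball c R))
    (hM : ∀ z ∈ ball c R, ‖(z - c) * deriv f z - (f z - f c)‖ ≤ M * ‖z - c‖ ^ 2)
    {z : ℂ} (hz : z ∈ ball c R) : ‖deriv (dslope f c) z‖ ≤ M := by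
  have hoff : ∀ w ∈ ball c R, w ≠ c → ‖deriv (dslope f c) w‖ ≤ M := by
    intro w hw hwc
    have hwc' : 0 < ‖w - c‖ := norm_pos_iff.2 (sub_ne_zero.2 hwc)
    rw [((hf.differentiableAt (isOpen_ball.mem_nhds hw)).hasDerivAt.dslope_of_ne hwc).deriv,
      norm_div, norm_pow, div_le_iff₀ (pow_pos hwc' 2), mul_comm (deriv f w)]
    exact hM w hw
  rcases eq_or_ne z c with rfl | hzc
  -- at the centre the bound passes to the limit, `deriv (dslope f c)` being holomorphic
  · have hcont : ContinuousAt (deriv (dslope f z)) z :=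
      (((differentiableOn_dslope (isOpen_ball.mem_nhds hz)).2 hf).analyticOnNhd
        isOpen_ball).deriv.continuousOn.continuousAt (isOpen_ball.mem_nhds hz)
    refine le_of_tendsto (x := nhdsWithin z {z}ᶜ) (hcont.norm.mono_left nhdsWithin_le_nhds) ?_
    filter_upwards [nhdsWithin_le_nhds (isOpen_ball.mem_nhds hz), self_mem_nhdsWithin]
      with w hw hwz using hoff w hw hwz
  · exact hoff z hz hzc

theorem norm_dslope_sub_deriv_le {f : ℂ → ℂ} {c : ℂ} {R M : ℝ}
    (hf : DifferentiableOn ℂ f (ball c R))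
    (hM : ∀ z ∈ ball c R, ‖(z - c) * deriv f z - (f z - f c)‖ ≤ M * ‖z - c‖ ^ 2)
    {z : ℂ} (hz : z ∈ ball c R) : ‖dslope f c z - deriv f c‖ ≤ M * ‖z - c‖ := by
  have hc : c ∈ ball c R := mem_ball_self (pos_of_mem_ball hz)
  have hF := (differentiableOn_dslope (isOpen_ball.mem_nhds hc)).2 hf
  simpa only [dslope_same] using (convex_ball c R).norm_image_sub_le_of_norm_deriv_le
    (fun w hw => hF.differentiableAt (isOpen_ball.mem_nhds hw))
    (fun w hw => norm_deriv_dslope_le hf hM hw) hc hz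

theorem norm_sub_mul_deriv_sub_le {f : ℂ → ℂ} {c : ℂ} {R M : ℝ}
    (hf : DifferentiableOn ℂ f (ball c R))
    (hM : ∀ z ∈ ball c R, ‖(z - c) * deriv f z - (f z - f c)‖ ≤ M) {z : ℂ} (hz : z ∈ ball c R) :
    ‖(z - c) * deriv f z - (f z - f c)‖ ≤ M / R ^ 2 * ‖z - c‖ ^ 2 := by
  have hc : ball c R ∈ 𝓝 c := isOpen_ball.mem_nhds (mem_ball_self (pos_of_mem_ball hz))
  have hf' : DifferentiableOn ℂ (deriv f) (ball c R) :=
    (hf.analyticOnNhd isOpen_ball).deriv.differentiableOn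
  set g : ℂ → ℂ := fun w => (w - c) * deriv f w - (f w - f c)
  have hg'c : deriv g c = 0 := by
    have hd := (((hasDerivAt_id' c).sub_const c).fun_mul
      (hf'.differentiableAt hc).hasDerivAt).fun_sub
      ((hf.differentiableAt hc).hasDerivAt.sub_const (f c))
    simpa using hd.deriv
  have hgc : g c = 0 := by simp [g]
  simpa [hgc] using norm_sub_le_div_sq_mul_sq_of_deriv_eq_zero (g := g)
    (((differentiableOn_id.sub_const c).mul hf').sub (hf.sub_const (f c))) hg'c
    (fun w hw => by simpa [hgc] using hM w hw) hz

theorem norm_deriv_sub_deriv_le {f : ℂ → ℂ} {c : ℂ} {R M : ℝ}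
    (hf : DifferentiableOn ℂ f (ball c R))
    (hM : ∀ z ∈ ball c R, ‖(z - c) * deriv f z - (f z - f c)‖ ≤ M) {z : ℂ} (hz : z ∈ ball c R) :
    ‖deriv f z - deriv f c‖ ≤ 2 * M / R ^ 2 * ‖z - c‖ := by
  rcases eq_or_ne z c with rfl | hzc
  · simp
  have hsplit : deriv f z - deriv f c =
      ((z - c) * deriv f z - (f z - f c)) / (z - c) + (dslope f c z - deriv f c) := by
    rw [dslope_of_ne _ hzc, slope_def_field]
    field_simp [sub_ne_zero.2 hzc]
    ring
  calc ‖deriv f z - deriv f c‖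
      ≤ ‖(z - c) * deriv f z - (f z - f c)‖ / ‖z - c‖ + ‖dslope f c z - deriv f c‖ := by
        rw [hsplit, ← norm_div]
        exact norm_add_le _ _
    _ ≤ M / R ^ 2 * ‖z - c‖ ^ 2 / ‖z - c‖ + M / R ^ 2 * ‖z - c‖ := by
        gcongr
        · exact norm_sub_mul_deriv_sub_le hf hM hz
        · exact norm_dslope_sub_deriv_le hf (fun w hw => norm_sub_mul_deriv_sub_le hf hM hw) hz
    _ = 2 * M / R ^ 2 * ‖z - c‖ := by field_simp; ring

end Complex

theorem Convex.injOn_of_norm_deriv_sub_one_le {𝕜 : Type*} [RCLike 𝕜] {f : 𝕜 → 𝕜} {s : Set 𝕜}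
    {q : ℝ} (hs : Convex ℝ s) (hf : ∀ x ∈ s, DifferentiableAt 𝕜 f x)
    (hq : ∀ x ∈ s, ‖deriv f x - 1‖ ≤ q) (hq1 : q < 1) : Set.InjOn f s := by
  intro x hx y hy hxy
  have hlip := hs.norm_image_sub_le_of_norm_deriv_le (f := fun z => f z - z) (C := q)
    (fun z hz => (hf z hz).sub differentiableAt_id)
    (fun z hz => by rw [((hf z hz).hasDerivAt.fun_sub (hasDerivAt_id' z)).deriv]; exact hq z hz)
    hx hy
  rw [hxy, sub_sub_sub_cancel_left, norm_sub_rev] at hlip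
  by_contra hne
  have : 0 < ‖y - x‖ := norm_pos_iff.2 (sub_ne_zero.2 (Ne.symm hne))
  nlinarith

theorem injOn_ball_inter_ball_of_norm_deriv_sub_one_le {𝕜 : Type*} [RCLike 𝕜] {f : 𝕜 → 𝕜}
    {R K : ℝ} (hK : 0 < K) (hf : DifferentiableOn 𝕜 f (ball 0 R))
    (hf' : ∀ z ∈ ball (0 : 𝕜) R, ‖deriv f z - 1‖ ≤ K * ‖z‖) :
    Set.InjOn f (ball 0 R ∩ ball 0 (1 / K)) := by
  intro z hz w hw
  set r := max ‖z‖ ‖w‖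
  have hsub : closedBall (0 : 𝕜) r ⊆ ball 0 R :=
    closedBall_subset_ball (max_lt (mem_ball_zero_iff.1 hz.1) (mem_ball_zero_iff.1 hw.1))
  have hr : K * r < 1 := by
    rw [mul_comm, ← lt_div_iff₀ hK]
    exact max_lt (mem_ball_zero_iff.1 hz.2) (mem_ball_zero_iff.1 hw.2)
  refine (convex_closedBall (0 : 𝕜) r).injOn_of_norm_deriv_sub_one_le
    (fun u hu => hf.differentiableAt (isOpen_ball.mem_nhds (hsub hu)))
    (fun u hu => (hf' u (hsub hu)).trans ?_) hr
    (mem_closedBall_zero_iff.2 (le_max_left _ _)) (mem_closedBall_zero_iff.2 (le_max_right _ _))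
  gcongr
  exact mem_closedBall_zero_iff.1 hu

theorem stmt_14 (lam : ℝ) (hlam : 0 < lam) (f : ℂ → ℂ)
    (hf : DifferentiableOn ℂ f (ball (0:ℂ) 1))
    (hf0 : f 0 = 0) (hf1 : deriv f 0 = 1)
    (hΩ : ∀ z ∈ ball (0:ℂ) 1, ‖z * deriv f z - f z‖ < lam) :
    (∀ z ∈ ball (0:ℂ) 1, ‖deriv f z - 1‖ ≤ 2 * lam * ‖z‖) ∧
    Set.InjOn f (ball (0:ℂ) 1 ∩ ball (0:ℂ) (1 / (2 * lam))) := by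
  have hderiv : ∀ z ∈ ball (0:ℂ) 1, ‖deriv f z - 1‖ ≤ 2 * lam * ‖z‖ := fun z hz => by
    simpa [hf1] using
      norm_deriv_sub_deriv_le hf (fun w hw => by simpa [hf0] using (hΩ w hw).le) hz
  exact ⟨hderiv, injOn_ball_inter_ball_of_norm_deriv_sub_one_le (by positivity) hf hderiv⟩
end
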